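/- Let ρ : ℝ^d → ℝ be a nonnegative radially symmetric function with compact support and finite p-th moment, and let 1 < p < ∞. Then for every u ∈ W^{1,p}(ℝ^d) and every n > 0, setting ρ_n(x) = n^d ρ(nx), one has n^p ∫_{ℝ^d} ∫_{ℝ^d} ρ_n(x−y) |u(x)−u(y)|^p dx dy ≤ (∫_{ℝ^d} ρ(z)|z|^p dz) · ∫_{ℝ^d} |∇u(x)|^p dx. -/

import Mathlib

/-!
Along the segment from `y` to `x`, the fundamental theorem of calculus and Jensen's inequality on
`[0, 1]` give `|u x - u y|^p ≤ |x - y|^p ∫₀¹ |∇u (y + s (x - y))|^p ds`. Integrating against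
`ρ_n (x - y)` and substituting `z = x - y`, Tonelli and translation invariance of Lebesgue measure
turn the right-hand side into `(∫ ρ_n(z) |z|^p dz) (∫ |∇u|^p)`, and the dilation `z ↦ n z` gives
`n^p ∫ ρ_n(z) |z|^p dz = ∫ ρ(z) |z|^p dz`. Everything is done with lower Lebesgue integrals,
so no integrability of the double integrand is needed.
-/

open MeasureTheory Set Module
open scoped ENNReal

theorem MeasureTheory.rpow_lintegral_le_lintegral_rpow {α : Type*} [MeasurableSpace α]
    {μ : Measure α} [IsProbabilityMeasure μ] {p : ℝ} (hp : 1 ≤ p) {f : α → ℝ≥0∞}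
    (hf : AEMeasurable f μ) :
    (∫⁻ x, f x ∂μ) ^ p ≤ ∫⁻ x, f x ^ p ∂μ := by
  have h := eLpNorm'_le_eLpNorm'_of_exponent_le one_pos hp μ hf.aestronglyMeasurable
  simp only [eLpNorm', enorm_eq_self, ENNReal.rpow_one, div_one] at h
  calc (∫⁻ x, f x ∂μ) ^ p ≤ ((∫⁻ x, f x ^ p ∂μ) ^ (1 / p)) ^ p := by gcongr
    _ = ∫⁻ x, f x ^ p ∂μ := by
      rw [← ENNReal.rpow_mul, one_div_mul_cancel (by positivity), ENNReal.rpow_one]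

theorem MeasureTheory.lintegral_enorm_eq_ofReal_integral {α : Type*} [MeasurableSpace α]
    {μ : Measure α} {f : α → ℝ} (hf : Integrable f μ) (hf_nonneg : 0 ≤ f) :
    ∫⁻ x, ‖f x‖ₑ ∂μ = ENNReal.ofReal (∫ x, f x ∂μ) := by
  rw [lintegral_enorm_of_nonneg hf_nonneg,
    ofReal_integral_eq_lintegral_ofReal hf (ae_of_all _ hf_nonneg)]

section

variable {E F : Type*} [NormedAddCommGroup E] [NormedSpace ℝ E]
  [NormedAddCommGroup F] [NormedSpace ℝ F] [CompleteSpace F]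

theorem enorm_sub_le_lintegral_enorm_deriv {g : ℝ → F} {a b : ℝ} (hab : a ≤ b)
    (hg : ∀ s ∈ Icc a b, DifferentiableAt ℝ g s) :
    ‖g b - g a‖ₑ ≤ ∫⁻ s in Ioc a b, ‖deriv g s‖ₑ := by
  by_cases hfin : ∫⁻ s in Ioc a b, ‖deriv g s‖ₑ = ∞
  · simp [hfin]
  have hint : IntervalIntegrable (deriv g) volume a b :=
    (intervalIntegrable_iff_integrableOn_Ioc_of_le hab).2
      ⟨(stronglyMeasurable_deriv g).aestronglyMeasurable, lt_top_iff_ne_top.2 hfin⟩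
  rw [← intervalIntegral.integral_deriv_eq_sub (by rwa [uIcc_of_le hab]) hint,
    intervalIntegral.integral_of_le hab]
  exact enorm_integral_le_lintegral_enorm _

theorem enorm_sub_le_mul_lintegral_enorm_fderiv {u : E → F} (hu : Differentiable ℝ u) (x y : E) :
    ‖u x - u y‖ₑ ≤ ‖x - y‖ₑ * ∫⁻ s in Ioc (0 : ℝ) 1, ‖fderiv ℝ u (y + s • (x - y))‖ₑ := by
  set g : ℝ → F := fun s => u (y + s • (x - y))
  have hg : ∀ s, HasDerivAt g (fderiv ℝ u (y + s • (x - y)) (x - y)) s := fun s =>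
    (hu _).hasFDerivAt.comp_hasDerivAt s (((hasDerivAt_id s).smul_const (x - y)).const_add y
      |>.congr_deriv (one_smul ℝ _))
  calc ‖u x - u y‖ₑ = ‖g 1 - g 0‖ₑ := by simp [g]
    _ ≤ ∫⁻ s in Ioc (0 : ℝ) 1, ‖deriv g s‖ₑ :=
      enorm_sub_le_lintegral_enorm_deriv zero_le_one fun s _ => (hg s).differentiableAt
    _ ≤ ∫⁻ s in Ioc (0 : ℝ) 1, ‖fderiv ℝ u (y + s • (x - y))‖ₑ * ‖x - y‖ₑ :=
      lintegral_mono fun s => (hg s).deriv ▸ ContinuousLinearMap.le_opENorm _ _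
    _ = _ := by rw [lintegral_mul_const' _ _ enorm_ne_top, mul_comm]

variable [MeasurableSpace E] [BorelSpace E]

theorem enorm_sub_rpow_le_mul_lintegral_enorm_fderiv_rpow {u : E → F} (hu : Differentiable ℝ u)
    {p : ℝ} (hp : 1 ≤ p) (x y : E) :
    ‖u x - u y‖ₑ ^ p ≤
      ‖x - y‖ₑ ^ p * ∫⁻ s in Ioc (0 : ℝ) 1, ‖fderiv ℝ u (y + s • (x - y))‖ₑ ^ p := by
  have : IsProbabilityMeasure (volume.restrict (Ioc (0 : ℝ) 1)) := ⟨by simp⟩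
  calc ‖u x - u y‖ₑ ^ p
      ≤ (‖x - y‖ₑ * ∫⁻ s in Ioc (0 : ℝ) 1, ‖fderiv ℝ u (y + s • (x - y))‖ₑ) ^ p := by
        gcongr; exact enorm_sub_le_mul_lintegral_enorm_fderiv hu x y
    _ = ‖x - y‖ₑ ^ p * (∫⁻ s in Ioc (0 : ℝ) 1, ‖fderiv ℝ u (y + s • (x - y))‖ₑ) ^ p :=
      ENNReal.mul_rpow_of_nonneg _ _ (by positivity)
    _ ≤ _ := by
      gcongr
      exact rpow_lintegral_le_lintegral_rpow hp
        ((measurable_fderiv ℝ u).enorm.comp (by fun_prop : Continuous _).measurable).aemeasurable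

variable [FiniteDimensional ℝ E] (μ : Measure E) [μ.IsAddHaarMeasure]

theorem MeasureTheory.Measure.lintegral_comp_smul (f : E → ℝ≥0∞) {r : ℝ} (hr : r ≠ 0) :
    ∫⁻ x, f (r • x) ∂μ = (‖r‖ₑ ^ finrank ℝ E)⁻¹ * ∫⁻ x, f x ∂μ := by
  rw [← enorm_pow, ← enorm_inv (pow_ne_zero _ hr), Real.enorm_eq_ofReal_abs, ← smul_eq_mul,
    ← lintegral_smul_measure, ← Measure.map_addHaar_smul μ hr]
  exact (lintegral_map_equiv f (MeasurableEquiv.smul₀ r hr)).symm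

theorem lintegral_lintegral_mul_lintegral_segment {K G : E → ℝ≥0∞} (hK : AEMeasurable K μ)
    (hG : Measurable G) :
    ∫⁻ x, ∫⁻ y, K (x - y) * (∫⁻ s in Ioc (0 : ℝ) 1, G (y + s • (x - y))) ∂μ ∂μ =
      (∫⁻ z, K z ∂μ) * ∫⁻ x, G x ∂μ := by
  have hS : Measurable (Function.uncurry fun x z : E =>
      ∫⁻ s in Ioc (0 : ℝ) 1, G (x + (s - 1) • z)) :=
    Measurable.lintegral_prod_right (hG.comp (by fun_prop))
  have hG_shift (z : E) :
      ∫⁻ x, (∫⁻ s in Ioc (0 : ℝ) 1, G (x + (s - 1) • z)) ∂μ = ∫⁻ x, G x ∂μ := by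
    rw [lintegral_lintegral_swap (f := fun x s => G (x + (s - 1) • z)) (hG.comp (by fun_prop :
      Measurable fun q : E × ℝ => q.1 + (q.2 - 1) • z)).aemeasurable]
    simp [lintegral_add_right_eq_self]
  calc ∫⁻ x, ∫⁻ y, K (x - y) * (∫⁻ s in Ioc (0 : ℝ) 1, G (y + s • (x - y))) ∂μ ∂μ
      = ∫⁻ x, ∫⁻ z, K z * (∫⁻ s in Ioc (0 : ℝ) 1, G (x + (s - 1) • z)) ∂μ ∂μ := by
        refine lintegral_congr fun x => ?_
        rw [← lintegral_sub_left_eq_self _ x]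
        refine lintegral_congr fun z => ?_
        rw [sub_sub_cancel]
        congr 1
        refine lintegral_congr fun s => ?_
        congr 1
        module
    _ = ∫⁻ z, K z * ∫⁻ x, (∫⁻ s in Ioc (0 : ℝ) 1, G (x + (s - 1) • z)) ∂μ ∂μ := by
        rw [lintegral_lintegral_swap (hK.comp_snd.mul hS.aemeasurable)]
        exact lintegral_congr fun z => lintegral_const_mul _ (hS.comp measurable_prodMk_right)
    _ = (∫⁻ z, K z ∂μ) * ∫⁻ x, G x ∂μ := by
        simp only [hG_shift, lintegral_mul_const'' _ hK]

theorem rpow_mul_lintegral_lintegral_smul_kernel_le {K : E → ℝ≥0∞} {p : ℝ} (hp : 1 ≤ p)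
    (hK : AEMeasurable (fun z => K z * ‖z‖ₑ ^ p) μ) {u : E → F} (hu : Differentiable ℝ u)
    {r : ℝ} (hr : r ≠ 0) :
    ‖r‖ₑ ^ p * ∫⁻ x, ∫⁻ y, ‖r‖ₑ ^ finrank ℝ E * K (r • (x - y)) * ‖u x - u y‖ₑ ^ p ∂μ ∂μ ≤
      (∫⁻ z, K z * ‖z‖ₑ ^ p ∂μ) * ∫⁻ x, ‖fderiv ℝ u x‖ₑ ^ p ∂μ := by
  have hp0 : 0 ≤ p := by linarith
  set N := ‖r‖ₑ ^ finrank ℝ E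
  have hN : N ≠ 0 := pow_ne_zero _ (enorm_ne_zero.2 hr)
  have hK_smul : AEMeasurable (fun z => N * (K (r • z) * ‖r • z‖ₑ ^ p)) μ :=
    (hK.comp_quasiMeasurePreserving (Measure.quasiMeasurePreserving_smul μ hr)).const_mul _
  calc ‖r‖ₑ ^ p * ∫⁻ x, ∫⁻ y, N * K (r • (x - y)) * ‖u x - u y‖ₑ ^ p ∂μ ∂μ
      = ∫⁻ x, ∫⁻ y, ‖r‖ₑ ^ p * (N * K (r • (x - y)) * ‖u x - u y‖ₑ ^ p) ∂μ ∂μ := by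
        simp_rw [← lintegral_const_mul' _ _ (ENNReal.rpow_ne_top_of_nonneg hp0 enorm_ne_top)]
    _ ≤ ∫⁻ x, ∫⁻ y, N * (K (r • (x - y)) * ‖r • (x - y)‖ₑ ^ p) *
          (∫⁻ s in Ioc (0 : ℝ) 1, ‖fderiv ℝ u (y + s • (x - y))‖ₑ ^ p) ∂μ ∂μ := by
        refine lintegral_mono fun x => lintegral_mono fun y => ?_
        rw [enorm_smul, ENNReal.mul_rpow_of_nonneg _ _ hp0]
        calc _ ≤ ‖r‖ₑ ^ p * (N * K (r • (x - y)) * (‖x - y‖ₑ ^ p *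
              ∫⁻ s in Ioc (0 : ℝ) 1, ‖fderiv ℝ u (y + s • (x - y))‖ₑ ^ p)) := by
              gcongr; exact enorm_sub_rpow_le_mul_lintegral_enorm_fderiv_rpow hu hp x y
          _ = _ := by ring
    _ = (∫⁻ z, N * (K (r • z) * ‖r • z‖ₑ ^ p) ∂μ) * ∫⁻ x, ‖fderiv ℝ u x‖ₑ ^ p ∂μ :=
        lintegral_lintegral_mul_lintegral_segment μ hK_smul
          ((measurable_fderiv ℝ u).enorm.pow_const p)
    _ = _ := by
        rw [lintegral_const_mul' _ _ (ENNReal.pow_ne_top enorm_ne_top),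
          Measure.lintegral_comp_smul μ (fun z => K z * ‖z‖ₑ ^ p) hr,
          ENNReal.mul_inv_cancel_left hN (ENNReal.pow_ne_top enorm_ne_top)]

end

theorem stmt_0_general (d : ℕ) (p : ℝ) (hp : 1 < p)
    (ρ : EuclideanSpace ℝ (Fin d) → ℝ)
    (hρ_nonneg : ∀ x, 0 ≤ ρ x)
    (hρ_mom : Integrable (fun z => ρ z * ‖z‖ ^ p))
    (u : EuclideanSpace ℝ (Fin d) → ℝ)
    (hu_diff : Differentiable ℝ u)
    (hu_grad : MemLp (fun x => ‖fderiv ℝ u x‖) (ENNReal.ofReal p))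
    (n : ℝ) (hn : 0 < n) :
    n ^ p * ∫ x, ∫ y, (n ^ d * ρ (n • (x - y))) * |u x - u y| ^ p ≤
      (∫ z, ρ z * ‖z‖ ^ p) * ∫ x, ‖fderiv ℝ u x‖ ^ p := by
  have hp0 : 0 ≤ p := by linarith
  have henorm_moment : ∀ z : EuclideanSpace ℝ (Fin d), ‖ρ z * ‖z‖ ^ p‖ₑ = ‖ρ z‖ₑ * ‖z‖ₑ ^ p :=
    fun z => by rw [enorm_mul, Real.enorm_rpow_of_nonneg (norm_nonneg _) hp0, enorm_norm]
  have hmoment_integrand_nonneg : 0 ≤ fun z => ρ z * ‖z‖ ^ p :=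
    fun z => mul_nonneg (hρ_nonneg z) (by positivity)
  have hmoment_nonneg : 0 ≤ ∫ z, ρ z * ‖z‖ ^ p := integral_nonneg hmoment_integrand_nonneg
  have hmoment : ∫⁻ z, ‖ρ z‖ₑ * ‖z‖ₑ ^ p = ENNReal.ofReal (∫ z, ρ z * ‖z‖ ^ p) := by
    simp_rw [← henorm_moment]
    exact lintegral_enorm_eq_ofReal_integral hρ_mom hmoment_integrand_nonneg
  have henergy : ∫⁻ x, ‖fderiv ℝ u x‖ₑ ^ p = ENNReal.ofReal (∫ x, ‖fderiv ℝ u x‖ ^ p) := by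
    have h := hu_grad.integrable_norm_rpow (by simpa using zero_lt_one.trans hp)
      ENNReal.ofReal_ne_top
    simp only [norm_norm, ENNReal.toReal_ofReal hp0] at h
    rw [← lintegral_enorm_eq_ofReal_integral h fun x => by positivity]
    simp only [Real.enorm_rpow_of_nonneg (norm_nonneg _) hp0, enorm_norm]
  have key := rpow_mul_lintegral_lintegral_smul_kernel_le volume hp.le
    (by simpa only [henorm_moment] using hρ_mom.aemeasurable.enorm) hu_diff hn.ne'
  rw [finrank_euclideanSpace_fin, hmoment, henergy, ← ENNReal.ofReal_mul hmoment_nonneg] at key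
  refine (ENNReal.ofReal_le_ofReal_iff
    (mul_nonneg hmoment_nonneg (integral_nonneg fun x => by positivity))).1 (le_trans ?_ key)
  refine (Real.ofReal_le_enorm _).trans ?_
  rw [enorm_mul, Real.enorm_rpow_of_nonneg hn.le hp0]
  gcongr
  refine (enorm_integral_le_lintegral_enorm _).trans
    (lintegral_mono fun x => (enorm_integral_le_lintegral_enorm _).trans_eq ?_)
  simp only [enorm_mul, enorm_pow, Real.enorm_rpow_of_nonneg (abs_nonneg _) hp0, Real.enorm_abs]

/-- nonlocal seminorm bounded by the p-th moment of ρ times the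
Dirichlet energy, for W^{1,p}(ℝ^d) functions. -/
theorem stmt_0 (d : ℕ) (hd : 0 < d) (p : ℝ) (hp : 1 < p)
    (ρ : EuclideanSpace ℝ (Fin d) → ℝ)
    (hρ_nonneg : ∀ x, 0 ≤ ρ x)
    (hρ_radial : ∀ x y : EuclideanSpace ℝ (Fin d), ‖x‖ = ‖y‖ → ρ x = ρ y)
    (hρ_supp : HasCompactSupport ρ)
    (hρ_mom : Integrable (fun z => ρ z * ‖z‖ ^ p))
    (u : EuclideanSpace ℝ (Fin d) → ℝ)
    (hu_diff : Differentiable ℝ u)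
    (hu_Lp : MemLp u (ENNReal.ofReal p))
    (hu_grad : MemLp (fun x => ‖fderiv ℝ u x‖) (ENNReal.ofReal p))
    (n : ℝ) (hn : 0 < n) :
    n ^ p * ∫ x, ∫ y, (n ^ d * ρ (n • (x - y))) * |u x - u y| ^ p ≤
      (∫ z, ρ z * ‖z‖ ^ p) * ∫ x, ‖fderiv ℝ u x‖ ^ p :=
  stmt_0_general d p hp ρ hρ_nonneg hρ_mom u hu_diff hu_grad n hn
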